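/- Let H be a Hilbert space, V : H → ℓ²(ℕ) a bounded linear operator, D : H → ℓ²(ℕ) an isometry, Ω ⊂ ℕ a finite set, y ∈ ℓ²(ℕ), and δ ≥ 0. If there exists at least one g ∈ H with ‖P_Ω V g − y‖_{ℓ²} ≤ δ and ‖Dg‖_{ℓ¹} < ∞, then the optimization problem inf{ ‖Dg‖_{ℓ¹} : g ∈ H, ‖P_Ω V g − y‖_{ℓ²} ≤ δ } attains its infimum: there exists a minimizer g_* ∈ H. -/

import Mathlib

noncomputable abbrev ℓ2 := lp (fun _ : ℕ => ℂ) 2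
open Filter Topology

lemma lp_coord (x : ℓ2) (j : ℕ) : (inner ℂ (lp.single 2 j (1:ℂ)) x : ℂ) = x j := by
  rw [lp.inner_single_left]; simp [RCLike.inner_apply]

lemma lp_coord_small (h : ℓ2) {e : ℝ} (he : 0 < e) : {j : ℕ | ¬ ‖h j‖ < e}.Finite := by
  have h2 : Summable (fun j => ‖h j‖ ^ (2:ℝ)) := by
    simpa using (lp.memℓp h).summable (p := 2) (by norm_num)
  have h0 : Tendsto (fun j => ‖h j‖) cofinite (𝓝 0) := by
    have := h2.tendsto_cofinite_zero
    have hc : Tendsto Real.sqrt (𝓝 0) (𝓝 0) := by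
      simpa using Real.continuous_sqrt.tendsto 0
    have := hc.comp this
    convert this using 2 with j
    rw [Function.comp_apply, show ((2:ℝ)) = ((2:ℕ):ℝ) by norm_num, Real.rpow_natCast,
      pow_two, Real.sqrt_mul_self (norm_nonneg _)]
  have : ∀ᶠ j in cofinite, ‖h j‖ < e := h0.eventually_lt_const he
  simpa [Filter.eventually_cofinite] using this

/-- weak-* type convergence: ℓ¹-bounded sequences converging coordinatewise
converge weakly in ℓ². -/
lemma weakstar_aux (M : ℝ) (c : ℕ → ℓ2) (a : ℓ2)
    (hc : ∀ n, Summable fun j => ‖c n j‖) (hcM : ∀ n, ∑' j, ‖c n j‖ ≤ M)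
    (ha : Summable fun j => ‖a j‖) (haM : ∑' j, ‖a j‖ ≤ M)
    (hpt : ∀ j, Tendsto (fun n => c n j) atTop (𝓝 (a j)))
    (h : ℓ2) :
    Tendsto (fun n => (inner ℂ h (c n) : ℂ)) atTop (𝓝 (inner ℂ h a)) := by
  have hM : 0 ≤ M := le_trans (tsum_nonneg (fun j => norm_nonneg _)) (hcM 0)
  rw [Metric.tendsto_nhds]
  intro ε hε
  set e : ℝ := ε / (4 * (M + 1)) with he_def
  have he : 0 < e := by positivity
  have Ffin : {j : ℕ | ¬ ‖h j‖ < e}.Finite := lp_coord_small h he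
  classical
  set F : Finset ℕ := Ffin.toFinset with hF_def
  have hF : ∀ j, j ∉ F → ‖h j‖ < e := by
    intro j hj
    by_contra hcon
    exact hj (Ffin.mem_toFinset.2 hcon)
  -- summability of difference
  have hΔ : ∀ n, Summable (fun j => ‖c n j - a j‖) := by
    intro n
    apply Summable.of_nonneg_of_le (fun j => norm_nonneg _) (fun j => norm_sub_le _ _)
      ((hc n).add ha)
  have hterm : ∀ n, Summable (fun j => ‖h j‖ * ‖c n j - a j‖) := by
    intro n
    apply Summable.of_nonneg_of_le (fun j => by positivity)
      (fun j => mul_le_mul_of_nonneg_right (lp.norm_apply_le_norm (by norm_num) h j)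
        (norm_nonneg _)) ((hΔ n).mul_left ‖h‖)
  -- finite part tends to zero
  have hfin : Tendsto (fun n => ∑ j ∈ F, ‖h j‖ * ‖c n j - a j‖) atTop (𝓝 0) := by
    have : Tendsto (fun n => ∑ j ∈ F, ‖h j‖ * ‖c n j - a j‖) atTop
        (𝓝 (∑ j ∈ F, ‖h j‖ * ‖a j - a j‖)) := by
      apply tendsto_finset_sum
      intro j _
      exact (((hpt j).sub tendsto_const_nhds).norm).const_mul _
    simpa using this
  have hev := hfin.eventually_lt_const (show (0:ℝ) < ε/2 by positivity)
  filter_upwards [hev.and (eventually_ge_atTop 0)] with n hn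
  obtain ⟨hn1, -⟩ := hn
  -- main estimate
  have key : dist (inner ℂ h (c n) : ℂ) (inner ℂ h a : ℂ) ≤
      (∑ j ∈ F, ‖h j‖ * ‖c n j - a j‖) + e * (M + M) := by
    rw [dist_eq_norm, ← inner_sub_right]
    have hcoe : ∀ j, (c n - a) j = c n j - a j := by
      intro j; rw [lp.coeFn_sub]; rfl
    rw [lp.inner_eq_tsum]
    have heq : ∀ j, (inner ℂ (h j) ((c n - a) j) : ℂ) = (starRingEnd ℂ) (h j) * (c n j - a j) := by
      intro j; rw [hcoe, RCLike.inner_apply]; ring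
    simp_rw [heq]
    have hsum1 : Summable (fun j => (starRingEnd ℂ) (h j) * (c n j - a j)) := by
      apply Summable.of_norm
      simpa [norm_mul] using hterm n
    calc ‖∑' j, (starRingEnd ℂ) (h j) * (c n j - a j)‖
        ≤ ∑' j, ‖(starRingEnd ℂ) (h j) * (c n j - a j)‖ := norm_tsum_le_tsum_norm (by simpa [norm_mul] using hterm n)
      _ = ∑' j, ‖h j‖ * ‖c n j - a j‖ := by simp [norm_mul]
      _ = (∑ j ∈ F, ‖h j‖ * ‖c n j - a j‖) + ∑' (j : ((F : Set ℕ)ᶜ : Set ℕ)), ‖h (j:ℕ)‖ * ‖c n (j:ℕ) - a (j:ℕ)‖ :=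
          (Summable.sum_add_tsum_compl (s := F) (hterm n)).symm
      _ ≤ (∑ j ∈ F, ‖h j‖ * ‖c n j - a j‖) + e * (M + M) := by
          gcongr
          calc ∑' (j : ((F : Set ℕ)ᶜ : Set ℕ)), ‖h (j:ℕ)‖ * ‖c n (j:ℕ) - a (j:ℕ)‖
              ≤ ∑' (j : ((F : Set ℕ)ᶜ : Set ℕ)), e * (‖c n (j:ℕ)‖ + ‖a (j:ℕ)‖) := by
                apply Summable.tsum_le_tsum _ ((hterm n).subtype _) ((((hc n).add ha).mul_left e).subtype _)
                rintro ⟨j, hj⟩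
                have hj' : j ∉ F := by simpa using hj
                exact mul_le_mul (le_of_lt (hF j hj')) (norm_sub_le _ _) (norm_nonneg _) he.le
            _ = e * ∑' (j : ((F : Set ℕ)ᶜ : Set ℕ)), (‖c n (j:ℕ)‖ + ‖a (j:ℕ)‖) := tsum_mul_left
            _ ≤ e * ∑' j, (‖c n j‖ + ‖a j‖) := by
                gcongr
                exact Summable.tsum_subtype_le _ _ (fun j => by positivity) ((hc n).add ha)
            _ ≤ e * (M + M) := by
                gcongr
                rw [Summable.tsum_add (hc n) ha]
                exact add_le_add (hcM n) haM
  have he2 : e * (M + M) ≤ ε / 2 := by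
    rw [he_def, div_mul_eq_mul_div, div_le_div_iff₀ (by positivity) (by norm_num)]
    nlinarith
  calc dist (inner ℂ h (c n) : ℂ) (inner ℂ h a : ℂ)
      ≤ (∑ j ∈ F, ‖h j‖ * ‖c n j - a j‖) + e * (M + M) := key
    _ < ε/2 + ε/2 := by exact add_lt_add_of_lt_of_le hn1 he2
    _ = ε := by ring

/-- Existence of minimizers of the analysis `ℓ¹` problem: if some `g` is feasible
(`‖P_Ω V g − y‖_{ℓ²} ≤ δ`) with `‖Dg‖_{ℓ¹} < ∞`, then the problem
`inf { ‖Dg‖_{ℓ¹} : ‖P_Ω V g − y‖_{ℓ²} ≤ δ }` attains its infimum. -/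
theorem stmt_9 {H : Type*} [NormedAddCommGroup H] [InnerProductSpace ℂ H] [CompleteSpace H]
    (V D : H →L[ℂ] ℓ2) (hD : ∀ f : H, ‖D f‖ = ‖f‖)
    (Ω : Finset ℕ) (y : ℓ2) (δ : ℝ) (hδ : 0 ≤ δ)
    (hfeas : ∃ g : H,
      Real.sqrt (∑ j ∈ Ω, ‖(V g) j - y j‖ ^ 2) ≤ δ ∧
      Summable (fun j => ‖(D g) j‖)) :
    ∃ gstar : H,
      Real.sqrt (∑ j ∈ Ω, ‖(V gstar) j - y j‖ ^ 2) ≤ δ ∧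
      Summable (fun j => ‖(D gstar) j‖) ∧
      ∀ g : H,
        Real.sqrt (∑ j ∈ Ω, ‖(V g) j - y j‖ ^ 2) ≤ δ →
        Summable (fun j => ‖(D g) j‖) →
        ∑' j, ‖(D gstar) j‖ ≤ ∑' j, ‖(D g) j‖ := by
  classical
  -- the set of attained objective values
  set S : Set ℝ := {r | ∃ g : H,
      Real.sqrt (∑ j ∈ Ω, ‖(V g) j - y j‖ ^ 2) ≤ δ ∧
      Summable (fun j => ‖(D g) j‖) ∧ r = ∑' j, ‖(D g) j‖} with hS_def
  obtain ⟨g₀, hg₀f, hg₀s⟩ := hfeas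
  have hSne : S.Nonempty := ⟨_, g₀, hg₀f, hg₀s, rfl⟩
  have hS0 : ∀ r ∈ S, (0:ℝ) ≤ r := by
    rintro r ⟨g, -, -, rfl⟩
    exact tsum_nonneg fun j => norm_nonneg _
  set m : ℝ := sInf S with hm_def
  have hm0 : 0 ≤ m := le_csInf hSne hS0
  have hmle : ∀ r ∈ S, m ≤ r := fun r hr => csInf_le ⟨0, hS0⟩ hr
  -- minimizing sequence
  have hseq : ∀ n : ℕ, ∃ g : H,
      Real.sqrt (∑ j ∈ Ω, ‖(V g) j - y j‖ ^ 2) ≤ δ ∧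
      Summable (fun j => ‖(D g) j‖) ∧ ∑' j, ‖(D g) j‖ < m + 1/(n+1) := by
    intro n
    obtain ⟨r, hrS, hrlt⟩ := Real.lt_sInf_add_pos hSne (show (0:ℝ) < 1/(n+1) by positivity)
    obtain ⟨g, h1, h2, rfl⟩ := hrS
    exact ⟨g, h1, h2, hrlt⟩
  choose g hgf hgs hglt using hseq
  set M : ℝ := m + 1 with hM_def
  have hM0 : 0 ≤ M := by positivity
  have hbound : ∀ n, ∑' j, ‖(D (g n)) j‖ ≤ M := by
    intro n
    refine (hglt n).le.trans (add_le_add_right ?_ m)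
    rw [div_le_one (by positivity)]
    simp
  have hcoord : ∀ n j, ‖(D (g n)) j‖ ≤ M := by
    intro n j
    refine (Summable.le_tsum (hgs n) j fun b _ => norm_nonneg _).trans (hbound n)
  -- compactness: extract coordinatewise convergent subsequence
  set x : ℕ → (ℕ → ℂ) := fun n j => (D (g n)) j with hx_def
  have hK : IsCompact (Set.univ.pi fun _ : ℕ => Metric.closedBall (0:ℂ) M) :=
    isCompact_univ_pi fun _ => isCompact_closedBall _ _
  have hxK : ∀ n, x n ∈ Set.univ.pi fun _ : ℕ => Metric.closedBall (0:ℂ) M := by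
    intro n
    rw [Set.mem_univ_pi]
    intro j
    rw [Metric.mem_closedBall, dist_zero_right]
    exact hcoord n j
  obtain ⟨a, -, φ, hφ, hconv⟩ := hK.tendsto_subseq hxK
  have hpt : ∀ j, Tendsto (fun n => (D (g (φ n))) j) atTop (𝓝 (a j)) := by
    rw [tendsto_pi_nhds] at hconv
    exact hconv
  have hpta : ∀ j, Tendsto (fun n => ‖(D (g (φ n))) j‖) atTop (𝓝 ‖a j‖) :=
    fun j => (hpt j).norm
  -- ℓ¹ bounds on the limit
  have hfinsum : ∀ F : Finset ℕ, ∑ j ∈ F, ‖a j‖ ≤ m := by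
    intro F
    have h1 : Tendsto (fun n => ∑ j ∈ F, ‖(D (g (φ n))) j‖) atTop (𝓝 (∑ j ∈ F, ‖a j‖)) :=
      tendsto_finset_sum _ fun j _ => hpta j
    have h3 : Tendsto (fun n : ℕ => m + 1/((φ n : ℝ) + 1)) atTop (𝓝 (m + 0)) := by
      apply Tendsto.const_add
      exact tendsto_one_div_add_atTop_nhds_zero_nat.comp hφ.tendsto_atTop
    rw [add_zero] at h3
    refine le_of_tendsto_of_tendsto' h1 h3 fun n => ?_
    exact (Summable.sum_le_tsum F (fun j _ => norm_nonneg _) (hgs (φ n))).trans (hglt (φ n)).le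
  have hasum : Summable (fun j => ‖a j‖) :=
    summable_of_sum_le (fun j => norm_nonneg _) hfinsum
  have hatsum : ∑' j, ‖a j‖ ≤ m := Summable.tsum_le_of_sum_le hasum hfinsum
  have habd : ∀ j, ‖a j‖ ≤ M := fun j =>
    le_of_tendsto (hpta j) (Eventually.of_forall fun n => hcoord (φ n) j)
  -- the limit as an element of ℓ2
  have hamem : Memℓp a 2 := by
    apply memℓp_gen
    apply Summable.of_nonneg_of_le (fun j => by positivity) _ (hasum.mul_left M)
    intro j
    rw [ENNReal.toReal_ofNat, show ((2:ℝ)) = ((2:ℕ):ℝ) by norm_num, Real.rpow_natCast, pow_two]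
    exact mul_le_mul_of_nonneg_right (habd j) (norm_nonneg _)
  set A : ℓ2 := ⟨a, hamem⟩ with hA_def
  have hAcoe : ∀ j, A j = a j := fun j => rfl
  -- weak convergence
  have key : ∀ h : ℓ2, Tendsto (fun n => (inner ℂ h (D (g (φ n))) : ℂ)) atTop (𝓝 (inner ℂ h A)) := by
    intro h
    apply weakstar_aux M (fun n => D (g (φ n))) A (fun n => hgs (φ n))
      (fun n => hbound (φ n)) (by simpa [hAcoe] using hasum)
      ((by simpa [hAcoe] using hatsum : ∑' j, ‖A j‖ ≤ m).trans (by simp [hM_def]))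
      (fun j => by simpa [hAcoe] using hpt j)
  -- A belongs to the range of D
  let Dli : H →ₗᵢ[ℂ] ℓ2 := ⟨(D : H →ₗ[ℂ] ℓ2), hD⟩
  have hinner : ∀ f f' : H, (inner ℂ (D f) (D f') : ℂ) = inner ℂ f f' := fun f f' =>
    Dli.inner_map_map f f'
  have hiso : Isometry (D : H → ℓ2) := AddMonoidHomClass.isometry_of_norm D hD
  have hclosed : IsClosed ((LinearMap.range (D : H →ₗ[ℂ] ℓ2) : Submodule ℂ ℓ2) : Set ℓ2) := by
    rw [LinearMap.coe_range]
    exact hiso.isClosedEmbedding.isClosed_range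
  haveI : CompleteSpace (LinearMap.range (D : H →ₗ[ℂ] ℓ2) : Submodule ℂ ℓ2) := hclosed.completeSpace_coe
  have hAmem : A ∈ (LinearMap.range (D : H →ₗ[ℂ] ℓ2) : Submodule ℂ ℓ2) := by
    rw [← Submodule.orthogonal_orthogonal (LinearMap.range (D : H →ₗ[ℂ] ℓ2) : Submodule ℂ ℓ2)]
    rw [Submodule.mem_orthogonal]
    intro u hu
    have hnull : ∀ n, (inner ℂ u (D (g (φ n))) : ℂ) = 0 := by
      intro n
      have : (inner ℂ (D (g (φ n))) u : ℂ) = 0 :=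
        (Submodule.mem_orthogonal _ u).1 hu _ (LinearMap.mem_range_self _ _)
      rw [← inner_conj_symm, this, map_zero]
    have h0 : Tendsto (fun n => (inner ℂ u (D (g (φ n))) : ℂ)) atTop (𝓝 0) := by
      simp only [hnull]
      exact tendsto_const_nhds
    exact (tendsto_nhds_unique (key u) h0)
  obtain ⟨gstar, hgstar⟩ := hAmem
  -- coordinates of D gstar
  have hDcoord : ∀ j, (D gstar) j = a j := by
    intro j
    rw [show (D gstar : ℓ2) = A from hgstar]
  -- convergence of V coordinates
  have hVconv : ∀ j, Tendsto (fun n => (V (g (φ n))) j) atTop (𝓝 ((V gstar) j)) := by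
    intro j
    set u : ℓ2 := D ((ContinuousLinearMap.adjoint V) (lp.single 2 j (1:ℂ))) with hu_def
    have hrepr : ∀ f : H, (inner ℂ u (D f) : ℂ) = (V f) j := by
      intro f
      rw [hu_def, hinner, ContinuousLinearMap.adjoint_inner_left, lp_coord]
    have := key u
    rw [show (inner ℂ u A : ℂ) = (V gstar) j by rw [← hgstar]; exact hrepr gstar] at this
    simpa only [hrepr] using this
  -- feasibility of gstar
  have hfeas_star : Real.sqrt (∑ j ∈ Ω, ‖(V gstar) j - y j‖ ^ 2) ≤ δ := by
    have hconv2 : Tendsto (fun n => ∑ j ∈ Ω, ‖(V (g (φ n))) j - y j‖ ^ 2) atTop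
        (𝓝 (∑ j ∈ Ω, ‖(V gstar) j - y j‖ ^ 2)) := by
      apply tendsto_finset_sum
      intro j _
      exact (((hVconv j).sub tendsto_const_nhds).norm).pow 2
    have hterm : ∀ n, ∑ j ∈ Ω, ‖(V (g (φ n))) j - y j‖ ^ 2 ≤ δ ^ 2 := by
      intro n
      have hnn : (0:ℝ) ≤ ∑ j ∈ Ω, ‖(V (g (φ n))) j - y j‖ ^ 2 :=
        Finset.sum_nonneg fun j _ => by positivity
      calc ∑ j ∈ Ω, ‖(V (g (φ n))) j - y j‖ ^ 2
          = Real.sqrt (∑ j ∈ Ω, ‖(V (g (φ n))) j - y j‖ ^ 2) ^ 2 := (Real.sq_sqrt hnn).symm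
        _ ≤ δ ^ 2 := by
            apply pow_le_pow_left₀ (Real.sqrt_nonneg _) (hgf (φ n))
    have hlim : ∑ j ∈ Ω, ‖(V gstar) j - y j‖ ^ 2 ≤ δ ^ 2 :=
      le_of_tendsto hconv2 (Eventually.of_forall hterm)
    calc Real.sqrt (∑ j ∈ Ω, ‖(V gstar) j - y j‖ ^ 2)
        ≤ Real.sqrt (δ ^ 2) := Real.sqrt_le_sqrt hlim
      _ = δ := Real.sqrt_sq hδ
  -- summability and minimality
  have hsum_star : Summable (fun j => ‖(D gstar) j‖) := by
    simpa only [hDcoord] using hasum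
  refine ⟨gstar, hfeas_star, hsum_star, ?_⟩
  intro gg hggf hggs
  have : ∑' j, ‖(D gg) j‖ ∈ S := ⟨gg, hggf, hggs, rfl⟩
  calc ∑' j, ‖(D gstar) j‖ = ∑' j, ‖a j‖ := by simp only [hDcoord]
    _ ≤ m := hatsum
    _ ≤ ∑' j, ‖(D gg) j‖ := hmle _ this
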